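/- Let E be a field of characteristic ≠ 2 and q an anisotropic quadratic form of rank r over E with u(E) < 2r. Then for every α ∈ E*, there exist anisotropic vectors x, y with α ≡ q(x)·q(y) modulo squares, i.e., α is a spinor norm. (Key step: q ⊥ (−α·q) is isotropic, giving q(x) = α·q(y) with q(y) ≠ 0.) -/

import Mathlib

/-!
Since `q ⊥ (-α • q)` has dimension `2r > u(E)`, it has a nontrivial zero `(x, y)`, i.e.
`q x = α * q y`. Anisotropy of `q` forces `q y ≠ 0`, so `α = q x * q y * (q y)⁻¹ ^ 2`.
-/

namespace QuadraticMap

theorem Anisotropic.comp {R M M' N : Type*} [CommSemiring R] [AddCommMonoid M]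
    [AddCommMonoid M'] [AddCommMonoid N] [Module R M] [Module R M'] [Module R N]
    {Q : QuadraticMap R M N} (hQ : Q.Anisotropic) {f : M' →ₗ[R] M}
    (hf : Function.Injective f) : (Q.comp f).Anisotropic :=
  fun x hx => hf <| by rw [map_zero]; exact hQ _ hx

variable {E V : Type*} [Field E] [AddCommGroup V] [Module E V]

theorem finrank_lt_of_anisotropic [FiniteDimensional E V] {N : ℕ}
    (hu : ∀ (n : ℕ) (φ : QuadraticForm E (Fin n → E)), φ.Anisotropic → n < N)
    {Q : QuadraticForm E V} (hQ : Q.Anisotropic) : Module.finrank E V < N :=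
  hu _ _ (hQ.comp (Module.finBasis E V).equivFun.symm.injective)

theorem exists_eq_mul_of_not_anisotropic_prod_neg_smul {q : QuadraticForm E V}
    (hq : q.Anisotropic) {α : E} (h : ¬(q.prod ((-α) • q)).Anisotropic) :
    ∃ x y : V, q y ≠ 0 ∧ q x = α * q y := by
  obtain ⟨⟨x, y⟩, hxy, hzero⟩ := (not_anisotropic_iff_exists _).mp h
  have hsum : q x = α * q y := by
    simp only [prod_apply, smul_apply, smul_eq_mul] at hzero
    linear_combination hzero
  refine ⟨x, y, fun hqy => hxy ?_, hsum⟩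
  have hx : x = 0 := hq x (by rw [hsum, hqy, mul_zero])
  rw [hx, hq y hqy, Prod.mk_zero_zero]

end QuadraticMap

theorem spinor_norm_of_anisotropic_u_invariant_lt_general
    (E : Type*) [Field E]
    (V : Type*) [AddCommGroup V] [Module E V] [FiniteDimensional E V]
    (q : QuadraticForm E V)
    (hani : q.Anisotropic)
    (hu : ∀ (n : ℕ) (φ : QuadraticForm E (Fin n → E)),
      φ.Anisotropic → n < 2 * Module.finrank E V) :
    ∀ α : E, α ≠ 0 →
      ∃ x y : V, q x ≠ 0 ∧ q y ≠ 0 ∧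
        ∃ c : E, c ≠ 0 ∧ α = q x * q y * c ^ 2 := by
  intro α hα
  have hiso : ¬(q.prod ((-α) • q)).Anisotropic := fun h =>
    (QuadraticMap.finrank_lt_of_anisotropic hu h).ne (by rw [Module.finrank_prod]; ring)
  obtain ⟨x, y, hqy, hxy⟩ :=
    QuadraticMap.exists_eq_mul_of_not_anisotropic_prod_neg_smul hani hiso
  refine ⟨x, y, hxy ▸ mul_ne_zero hα hqy, hqy, (q y)⁻¹, inv_ne_zero hqy, ?_⟩
  rw [hxy]
  field_simp

/-- **Anisotropic case of the surjectivity of the spinor norm.**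
Let `E` be a field of characteristic `≠ 2` and `q` an anisotropic quadratic form of
rank `r` over `E` with `u(E) < 2r`.  Then for every `α ∈ E*` there exist anisotropic
vectors `x`, `y` with `α ≡ q(x) · q(y)` modulo squares, i.e. `α` is a spinor norm of
`q`.  (Key step: `q ⊥ (−α·q)` is isotropic, giving `q(x) = α · q(y)` with
`q(y) ≠ 0`.) -/
theorem spinor_norm_of_anisotropic_u_invariant_lt
    (E : Type*) [Field E] (hchar : (2 : E) ≠ 0)
    (V : Type*) [AddCommGroup V] [Module E V] [FiniteDimensional E V]
    (q : QuadraticForm E V)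
    (hani : q.Anisotropic)
    (hu : ∀ (n : ℕ) (φ : QuadraticForm E (Fin n → E)),
      φ.Anisotropic → n < 2 * Module.finrank E V) :
    ∀ α : E, α ≠ 0 →
      ∃ x y : V, q x ≠ 0 ∧ q y ≠ 0 ∧
        ∃ c : E, c ≠ 0 ∧ α = q x * q y * c ^ 2 :=
  spinor_norm_of_anisotropic_u_invariant_lt_general E V q hani hu
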